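/- arXiv:1708.00219 — 5 statements merged into one kernel-verified Lean document; each statement's English description precedes it below -/
import Mathlib

section
/- Let G be a connected finite simple graph of order n ≥ 2 whose maximum degree satisfies Δ(G) ≥ n − 2, and let k ≥ 2 be an integer. Then G has a total [1,2]-set and γ_{t[1,2]}(G) = γ_{t[1,k]}(G) = 2. -/
open SimpleGraph

/-- The lexicographic product of two simple graphs. -/
def SimpleGraph.lexProd {V W : Type*} (G : SimpleGraph V) (H : SimpleGraph W) :
    SimpleGraph (V × W) where
  Adj p q := G.Adj p.1 q.1 ∨ (p.1 = q.1 ∧ H.Adj p.2 q.2)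
  symm := by
    constructor
    rintro p q (h | ⟨e, h⟩)
    · exact Or.inl h.symm
    · exact Or.inr ⟨e.symm, h.symm⟩
  loopless := by
    constructor
    rintro p (h | ⟨_, h⟩)
    · exact G.irrefl h
    · exact H.irrefl h

/-- The `H`-layer of the product over a vertex `v` of `G`: all pairs with first
coordinate `v`. -/
def layer {V W : Type*} (v : V) : Set (V × W) := {p | p.1 = v}

/-- `S` is a `[1,k]`-set of `G`: every vertex outside `S` has at least `1` and at
most `k` neighbors in `S`. -/
def IsOneK {V : Type*} (G : SimpleGraph V) (k : ℕ) (S : Set V) : Prop :=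
  ∀ v ∉ S, 1 ≤ (G.neighborSet v ∩ S).ncard ∧ (G.neighborSet v ∩ S).ncard ≤ k

/-- `S` is a total `[1,k]`-set of `G`: every vertex has at least `1` and at most `k`
neighbors in `S`. -/
def IsTotalOneK {V : Type*} (G : SimpleGraph V) (k : ℕ) (S : Set V) : Prop :=
  ∀ v, 1 ≤ (G.neighborSet v ∩ S).ncard ∧ (G.neighborSet v ∩ S).ncard ≤ k

/-- `S` is an independent `[1,k]`-set of `G`. -/
def IsIndepOneK {V : Type*} (G : SimpleGraph V) (k : ℕ) (S : Set V) : Prop :=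
  IsOneK G k S ∧ ∀ v ∈ S, ∀ w ∈ S, ¬ G.Adj v w

/-- `S` is `j`-dependent: every vertex of `S` has at most `j` neighbors in `S`. -/
def IsJDep {V : Type*} (G : SimpleGraph V) (j : ℕ) (S : Set V) : Prop :=
  ∀ v ∈ S, (G.neighborSet v ∩ S).ncard ≤ j

/-- `S` is an efficient dominating set of `G`. -/
def IsEffDom {V : Type*} (G : SimpleGraph V) (S : Set V) : Prop :=
  (∀ v ∉ S, (G.neighborSet v ∩ S).ncard = 1) ∧ ∀ v ∈ S, (G.neighborSet v ∩ S).ncard = 0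

/-- Membership in `SD^j_{[1,k]}(G)`: a `j`-dependent `[1,k]`-set such that every
vertex of `S` with no neighbor in `S` is at distance at least `3` from every other
vertex of `S`. -/
def InSD {V : Type*} (G : SimpleGraph V) (k j : ℕ) (S : Set V) : Prop :=
  IsOneK G k S ∧ IsJDep G j S ∧
    ∀ v ∈ S, (G.neighborSet v ∩ S).ncard = 0 → ∀ v' ∈ S, v' ≠ v → 3 ≤ G.dist v v'

/-- The `[1,k]`-domination number `γ_{[1,k]}`. -/
noncomputable def gammaOneK {V : Type*} (G : SimpleGraph V) (k : ℕ) : ℕ :=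
  sInf {n | ∃ S : Set V, IsOneK G k S ∧ S.ncard = n}

/-- The total `[1,k]`-domination number `γ_{t[1,k]}`. -/
noncomputable def gammaTotalOneK {V : Type*} (G : SimpleGraph V) (k : ℕ) : ℕ :=
  sInf {n | ∃ S : Set V, IsTotalOneK G k S ∧ S.ncard = n}

/-- The `[1,k]`-independence number `γ_{i[1,k]}`. -/
noncomputable def gammaIndepOneK {V : Type*} (G : SimpleGraph V) (k : ℕ) : ℕ :=
  sInf {n | ∃ S : Set V, IsIndepOneK G k S ∧ S.ncard = n}

/-- `D` is a dominating set of `G`. -/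
def IsDomSet {V : Type*} (G : SimpleGraph V) (D : Set V) : Prop :=
  ∀ v ∉ D, ∃ u ∈ D, G.Adj v u

/-- `D` is a total dominating set of `G`. -/
def IsTotalDomSet {V : Type*} (G : SimpleGraph V) (D : Set V) : Prop :=
  ∀ v, ∃ u ∈ D, G.Adj v u

/-- The domination number `γ`. -/
noncomputable def gammaDom {V : Type*} (G : SimpleGraph V) : ℕ :=
  sInf {n | ∃ D : Set V, IsDomSet G D ∧ D.ncard = n}

/-- The total domination number `γ_t`. -/
noncomputable def gammaTotalDom {V : Type*} (G : SimpleGraph V) : ℕ :=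
  sInf {n | ∃ D : Set V, IsTotalDomSet G D ∧ D.ncard = n}

/-! If `Δ(G) = deg v ≥ n - 2`, then at most one vertex `x ≠ v` misses `v`. When there is no such
`x`, `v` and any other vertex form a total dominating pair; otherwise `x` has a neighbour `u`
(connectivity), which cannot be `v` and hence is adjacent to `v`, and `{v, u}` totally dominates.
A total dominating set of size `2` is a total `[1,k]`-set for every `k ≥ 2`, and no total
`[1,k]`-set has fewer than two vertices, since a vertex and a neighbour of it in `S` each need a
neighbour in `S`. -/

namespace SimpleGraph

variable {V : Type*} {G : SimpleGraph V}

theorem IsTotalOneK.mono {k k' : ℕ} {S : Set V} (hkk' : k ≤ k') (hS : IsTotalOneK G k S) :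
    IsTotalOneK G k' S :=
  fun w => ⟨(hS w).1, (hS w).2.trans hkk'⟩

theorem IsTotalDomSet.isTotalOneK {k : ℕ} {S : Set V} (hS : IsTotalDomSet G S) (hfin : S.Finite)
    (hcard : S.ncard ≤ k) : IsTotalOneK G k S := by
  intro w
  obtain ⟨u, huS, hwu⟩ := hS w
  have hfin' : (G.neighborSet w ∩ S).Finite := hfin.inter_of_right _
  refine ⟨Nat.one_le_iff_ne_zero.mpr ?_, ?_⟩
  · exact (Set.ncard_pos hfin').mpr ⟨u, hwu, huS⟩ |>.ne'
  · exact (Set.ncard_inter_le_ncard_right _ _ hfin).trans hcard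

theorem IsTotalOneK.two_le_ncard [Finite V] [Nonempty V] {k : ℕ} {S : Set V}
    (hS : IsTotalOneK G k S) : 2 ≤ S.ncard := by
  have neighbor_in (w : V) : ∃ s ∈ S, G.Adj w s := by
    obtain ⟨s, hws, hs⟩ := Set.nonempty_of_ncard_ne_zero (Nat.one_le_iff_ne_zero.mp (hS w).1)
    exact ⟨s, hs, hws⟩
  obtain ⟨s, hs, -⟩ := neighbor_in (Classical.arbitrary V)
  obtain ⟨t, ht, hst⟩ := neighbor_in s
  exact (Set.one_lt_ncard_iff).mpr ⟨t, s, ht, hs, hst.ne'⟩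

theorem gammaTotalOneK_eq_two [Finite V] [Nonempty V] {k : ℕ} {S : Set V}
    (hS : IsTotalOneK G k S) (hcard : S.ncard = 2) : gammaTotalOneK G k = 2 := by
  have hmem : 2 ∈ {n | ∃ S : Set V, IsTotalOneK G k S ∧ S.ncard = n} := ⟨S, hS, hcard⟩
  rw [gammaTotalOneK]
  obtain ⟨T, hT, hTcard⟩ := Nat.sInf_mem ⟨2, hmem⟩
  exact le_antisymm (Nat.sInf_le hmem) (hTcard ▸ hT.two_le_ncard)

section Fintype

variable [Fintype V] [DecidableRel G.Adj]

theorem eq_of_not_adj_of_card_sub_two_le_degree {v x y : V}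
    (hdeg : Fintype.card V - 2 ≤ G.degree v) (hxv : x ≠ v) (hvx : ¬G.Adj v x) (hyv : y ≠ v)
    (hvy : ¬G.Adj v y) : x = y := by
  classical
  by_contra hxy
  have hsub : ({v, x, y} : Finset V) ⊆ (G.neighborFinset v)ᶜ := by
    intro a ha
    simp only [Finset.mem_insert, Finset.mem_singleton] at ha
    rw [Finset.mem_compl, mem_neighborFinset]
    rcases ha with rfl | rfl | rfl
    exacts [G.loopless.irrefl a, hvx, hvy]
  have hthree : ({v, x, y} : Finset V).card = 3 :=
    Finset.card_eq_three.mpr ⟨v, x, y, hxv.symm, hyv.symm, hxy, rfl⟩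
  have hle := Finset.card_le_card hsub
  rw [hthree, Finset.card_compl, card_neighborFinset_eq_degree] at hle
  have := G.degree_lt_card_verts v
  omega

theorem Connected.exists_adj_isTotalDomSet_pair (hconn : G.Connected)
    (hn : 2 ≤ Fintype.card V) {v : V} (hdeg : Fintype.card V - 2 ≤ G.degree v) :
    ∃ u, G.Adj v u ∧ IsTotalDomSet G {v, u} := by
  have : Nontrivial V := Fintype.one_lt_card_iff_nontrivial.mp hn
  by_cases hall : ∀ w, w ≠ v → G.Adj v w
  · obtain ⟨u, hu⟩ := exists_ne v
    refine ⟨u, hall u hu, fun w => ?_⟩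
    by_cases hwv : w = v
    · exact ⟨u, by simp, hwv ▸ hall u hu⟩
    · exact ⟨v, by simp, (hall w hwv).symm⟩
  · push Not at hall
    obtain ⟨x, hxv, hvx⟩ := hall
    have adj_of_ne_x {w : V} (hwv : w ≠ v) (hwx : w ≠ x) : G.Adj v w := by
      by_contra hvw
      exact hwx (eq_of_not_adj_of_card_sub_two_le_degree hdeg hwv hvw hxv hvx)
    obtain ⟨u, hxu⟩ := hconn.preconnected.exists_adj_of_nontrivial x
    have hvu : G.Adj v u := adj_of_ne_x (fun h => hvx (h ▸ hxu.symm)) hxu.ne'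
    refine ⟨u, hvu, fun w => ?_⟩
    by_cases hwv : w = v
    · exact ⟨u, by simp, hwv ▸ hvu⟩
    by_cases hwx : w = x
    · exact ⟨u, by simp, hwx ▸ hxu⟩
    · exact ⟨v, by simp, (adj_of_ne_x hwv hwx).symm⟩

end Fintype

end SimpleGraph

/-- A connected graph of order `n ≥ 2` with `Δ(G) ≥ n - 2` has a total
`[1,2]`-set and `γ_{t[1,2]}(G) = γ_{t[1,k]}(G) = 2` for every `k ≥ 2`. -/
theorem stmt0 {V : Type*} [Fintype V] (G : SimpleGraph V) [DecidableRel G.Adj]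
    (hconn : G.Connected) (hn : 2 ≤ Fintype.card V)
    (hdeg : Fintype.card V - 2 ≤ G.maxDegree) (k : ℕ) (hk : 2 ≤ k) :
    (∃ S : Set V, IsTotalOneK G 2 S) ∧
      gammaTotalOneK G 2 = 2 ∧ gammaTotalOneK G k = 2 := by
  have : Nonempty V := Fintype.card_pos_iff.mp (by omega)
  obtain ⟨v, hv⟩ := G.exists_maximal_degree_vertex
  obtain ⟨u, hvu, hdom⟩ := hconn.exists_adj_isTotalDomSet_pair hn (hv ▸ hdeg)
  have hcard : ({v, u} : Set V).ncard = 2 := Set.ncard_pair hvu.ne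
  have htotal : IsTotalOneK G 2 {v, u} := hdom.isTotalOneK (Set.toFinite _) hcard.le
  exact ⟨⟨_, htotal⟩, gammaTotalOneK_eq_two htotal hcard,
    gammaTotalOneK_eq_two (htotal.mono hk) hcard⟩
end

section
/- Let k ≥ 2 be an integer and let G be a path P_n with n ≥ 2 or a cycle C_n with n ≥ 3. Then γ_{[1,k]}(G) = γ_{i[1,k]}(G) = ⌈n/3⌉. -/
open SimpleGraph

/-! With `k ≥ 2` and maximum degree at most `2`, the `[1,k]`-sets are exactly the dominating
sets. A vertex dominates at most three vertices, so a dominating set of an `n`-vertex graph of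
maximum degree `2` has at least `⌈n/3⌉ = (n + 2) / 3` elements. Conversely the vertices
`1, 4, 7, …`, together with the last vertex when `n ≡ 1 (mod 3)`, form an independent
dominating set of that size in `P_n`, and also in `C_n`, whose only extra edge joins vertex `0`
(never chosen) to the last one. -/

namespace SimpleGraph

variable {V : Type*} {G H : SimpleGraph V} {k Δ : ℕ} {S : Set V}

theorem IsOneK.isDomSet (hS : IsOneK G k S) : IsDomSet G S := by
  intro v hv
  obtain ⟨u, hadj, huS⟩ := Set.nonempty_of_ncard_ne_zero (Nat.one_le_iff_ne_zero.mp (hS v hv).1)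
  exact ⟨u, huS, hadj⟩

theorem IsDomSet.isOneK [Finite V] (hdeg : ∀ v, (G.neighborSet v).ncard ≤ k)
    (hS : IsDomSet G S) : IsOneK G k S := by
  intro v hv
  obtain ⟨u, huS, hadj⟩ := hS v hv
  exact ⟨Nat.one_le_iff_ne_zero.mpr (Set.ncard_ne_zero_of_mem ⟨hadj, huS⟩),
    (Set.ncard_le_ncard Set.inter_subset_left).trans (hdeg v)⟩

theorem IsDomSet.mono (hGH : G ≤ H) (hS : IsDomSet G S) : IsDomSet H S := fun v hv ↦
  let ⟨u, huS, hadj⟩ := hS v hv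
  ⟨u, huS, hGH hadj⟩

theorem IsDomSet.card_le_mul_ncard [Finite V] (hdeg : ∀ v, (G.neighborSet v).ncard ≤ Δ)
    (hS : IsDomSet G S) : Nat.card V ≤ (Δ + 1) * S.ncard := by
  set T := S.toFinite.toFinset
  have hcover : (Set.univ : Set V) = ⋃ s ∈ T, insert s (G.neighborSet s) := by
    refine (Set.eq_univ_of_forall fun v ↦ ?_).symm
    simp only [Set.mem_iUnion, Set.Finite.mem_toFinset, T]
    by_cases hv : v ∈ S
    · exact ⟨v, hv, Set.mem_insert v _⟩
    · obtain ⟨u, huS, hadj⟩ := hS v hv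
      exact ⟨u, huS, Set.mem_insert_of_mem u hadj.symm⟩
  calc Nat.card V = (⋃ s ∈ T, insert s (G.neighborSet s)).ncard := by
        rw [← hcover, Set.ncard_univ]
    _ ≤ ∑ s ∈ T, (insert s (G.neighborSet s)).ncard := T.set_ncard_biUnion_le _
    _ ≤ ∑ _s ∈ T, (Δ + 1) :=
        Finset.sum_le_sum fun s _ ↦
          (Set.ncard_insert_le _ _).trans (Nat.add_le_add_right (hdeg s) 1)
    _ = (Δ + 1) * S.ncard := by
        rw [Finset.sum_const, smul_eq_mul, mul_comm, Set.ncard_eq_toFinset_card S]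

theorem IsOneK.ceil_div_le_ncard [Finite V] (hdeg : ∀ v, (G.neighborSet v).ncard ≤ Δ)
    (hS : IsOneK G k S) : (Nat.card V + Δ) / (Δ + 1) ≤ S.ncard := by
  have hbound := hS.isDomSet.card_le_mul_ncard hdeg
  rw [← Nat.lt_add_one_iff, Nat.div_lt_iff_lt_mul Δ.add_one_pos, add_one_mul, mul_comm]
  omega

theorem gammaOneK_eq_and_gammaIndepOneK_eq {m : ℕ} (hlow : ∀ S, IsOneK G k S → m ≤ S.ncard)
    (hS : IsIndepOneK G k S) (hcard : S.ncard ≤ m) :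
    gammaOneK G k = m ∧ gammaIndepOneK G k = m := by
  have hm : S.ncard = m := le_antisymm hcard (hlow S hS.1)
  exact ⟨le_antisymm (Nat.sInf_le ⟨S, hS.1, hm⟩)
      (le_csInf ⟨m, S, hS.1, hm⟩ fun _ ⟨T, hT, h⟩ ↦ h ▸ hlow T hT),
    le_antisymm (Nat.sInf_le ⟨S, hS, hm⟩)
      (le_csInf ⟨m, S, hS, hm⟩ fun _ ⟨T, hT, h⟩ ↦ h ▸ hlow T hT.1)⟩

theorem ncard_neighborSet_cycleGraph_le_two {n : ℕ} (v : Fin n) :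
    ((cycleGraph n).neighborSet v).ncard ≤ 2 :=
  match n, v with
  | 0, v => v.elim0
  | 1, _ => by simp [cycleGraph_one_eq_bot]
  | _ + 2, _ => by
    rw [cycleGraph_neighborSet]
    exact (Set.ncard_insert_le _ _).trans (by simp)

theorem ncard_neighborSet_pathGraph_le_two {n : ℕ} (v : Fin n) :
    ((pathGraph n).neighborSet v).ncard ≤ 2 :=
  (Set.ncard_le_ncard fun _ h ↦ pathGraph_le_cycleGraph h).trans
    (ncard_neighborSet_cycleGraph_le_two v)

theorem pathGraph_adj_or_of_cycleGraph_adj {n : ℕ} {u v : Fin n} (h : (cycleGraph n).Adj u v) :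
    (pathGraph n).Adj u v ∨ (u.val = 0 ∧ v.val + 1 = n) ∨ (v.val = 0 ∧ u.val + 1 = n) := by
  have hsub : ∀ a b : Fin n, (a - b).val = 1 →
      b.val + 1 = a.val ∨ (a.val = 0 ∧ b.val + 1 = n) := by
    intro a b hab
    rcases le_or_gt b a with hle | hlt
    · rw [Fin.coe_sub_iff_le.mpr hle] at hab
      omega
    · rw [Fin.coe_sub_iff_lt.mpr hlt] at hab
      omega
  rw [pathGraph_adj]
  rcases cycleGraph_adj'.mp h with h | h
  · have := hsub u v h
    tauto
  · have := hsub v u h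
    tauto

def everyThirdVertex (n : ℕ) : Set (Fin n) :=
  {v | v.val % 3 = 1 ∨ (v.val % 3 = 0 ∧ v.val + 1 = n)}

theorem mem_everyThirdVertex {n : ℕ} {v : Fin n} :
    v ∈ everyThirdVertex n ↔ v.val % 3 = 1 ∨ (v.val % 3 = 0 ∧ v.val + 1 = n) :=
  Iff.rfl

theorem ncard_everyThirdVertex_le (n : ℕ) : (everyThirdVertex n).ncard ≤ (n + 2) / 3 := by
  calc (everyThirdVertex n).ncard ≤ (Finset.range ((n + 2) / 3) : Set ℕ).ncard := by
        refine Set.ncard_le_ncard_of_injOn (fun v ↦ v.val / 3) (fun v _ ↦ ?_)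
          (fun v hv w hw h ↦ ?_) (Finset.finite_toSet _)
        · simp only [Finset.coe_range, Set.mem_Iio]
          omega
        · rw [mem_everyThirdVertex] at hv hw
          dsimp only at h
          exact Fin.ext (by omega)
    _ = (n + 2) / 3 := by rw [Set.ncard_coe_finset, Finset.card_range]

theorem isDomSet_pathGraph_everyThirdVertex (n : ℕ) :
    IsDomSet (pathGraph n) (everyThirdVertex n) := by
  intro v hv
  rw [mem_everyThirdVertex] at hv
  have hvn := v.isLt
  by_cases hv0 : v.val % 3 = 0
  · exact ⟨⟨v.val + 1, by omega⟩, mem_everyThirdVertex.mpr (by dsimp only; omega),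
      pathGraph_adj.mpr (Or.inl rfl)⟩
  · exact ⟨⟨v.val - 1, by omega⟩, mem_everyThirdVertex.mpr (by dsimp only; omega),
      pathGraph_adj.mpr (Or.inr (by dsimp only; omega))⟩

theorem not_pathGraph_adj_of_mem_everyThirdVertex {n : ℕ} {v w : Fin n}
    (hv : v ∈ everyThirdVertex n) (hw : w ∈ everyThirdVertex n) : ¬ (pathGraph n).Adj v w := by
  rw [mem_everyThirdVertex] at hv hw
  rw [pathGraph_adj]
  omega

theorem not_cycleGraph_adj_of_mem_everyThirdVertex {n : ℕ} (hn : 2 ≤ n) {v w : Fin n}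
    (hv : v ∈ everyThirdVertex n) (hw : w ∈ everyThirdVertex n) :
    ¬ (cycleGraph n).Adj v w := by
  intro h
  rcases pathGraph_adj_or_of_cycleGraph_adj h with h | h
  · exact not_pathGraph_adj_of_mem_everyThirdVertex hv hw h
  · rw [mem_everyThirdVertex] at hv hw
    omega

theorem gammaOneK_eq_and_gammaIndepOneK_eq_of_everyThirdVertex {n : ℕ}
    {G : SimpleGraph (Fin n)} (hk : 2 ≤ k) (hdeg : ∀ v, (G.neighborSet v).ncard ≤ 2)
    (hdom : IsDomSet G (everyThirdVertex n))
    (hind : ∀ v ∈ everyThirdVertex n, ∀ w ∈ everyThirdVertex n, ¬ G.Adj v w) :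
    gammaOneK G k = (n + 2) / 3 ∧ gammaIndepOneK G k = (n + 2) / 3 :=
  gammaOneK_eq_and_gammaIndepOneK_eq (fun _ hS ↦ by simpa using hS.ceil_div_le_ncard hdeg)
    ⟨hdom.isOneK fun v ↦ (hdeg v).trans hk, hind⟩ (ncard_everyThirdVertex_le n)

end SimpleGraph

/-- For `k ≥ 2`, the `[1,k]`-domination number and the
`[1,k]`-independence number of the path `P_n` (`n ≥ 2`) and of the cycle `C_n`
(`n ≥ 3`) both equal `⌈n/3⌉`. -/
theorem stmt4 (k : ℕ) (hk : 2 ≤ k) :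
    (∀ n : ℕ, 2 ≤ n →
      gammaOneK (SimpleGraph.pathGraph n) k = (n + 2) / 3 ∧
      gammaIndepOneK (SimpleGraph.pathGraph n) k = (n + 2) / 3) ∧
    (∀ n : ℕ, 3 ≤ n →
      gammaOneK (SimpleGraph.cycleGraph n) k = (n + 2) / 3 ∧
      gammaIndepOneK (SimpleGraph.cycleGraph n) k = (n + 2) / 3) :=
  ⟨fun n _ ↦ gammaOneK_eq_and_gammaIndepOneK_eq_of_everyThirdVertex hk
      ncard_neighborSet_pathGraph_le_two (isDomSet_pathGraph_everyThirdVertex n)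
      fun _ hv _ hw ↦ not_pathGraph_adj_of_mem_everyThirdVertex hv hw,
    fun n hn ↦ gammaOneK_eq_and_gammaIndepOneK_eq_of_everyThirdVertex hk
      ncard_neighborSet_cycleGraph_le_two
      ((isDomSet_pathGraph_everyThirdVertex n).mono pathGraph_le_cycleGraph)
      fun _ hv _ hw ↦ not_cycleGraph_adj_of_mem_everyThirdVertex (by omega) hv hw⟩
end

section
/- Let G be a connected finite simple graph, H a finite simple graph, and D a total [1,2]-set of the lexicographic product G∘H. If D contains more than two vertices of some H-layer H^v, then G is the one-vertex graph K_1 and H has a total [1,2]-set. -/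
/-!
Every vertex of the layer `H^v` is adjacent in `G ∘ H` to every vertex of `H^u` whenever
`u ~ v` in `G`, so a vertex of `H^u` would see all the (more than two) vertices of `D` in
`H^v`. Hence `v` is isolated in `G`, and connectivity forces `G = K_1`. For isolated `v` the
neighbourhood of `(v, w)` is the copy of `N_H(w)` inside `H^v`, so the trace of `D` on `H^v`
is a total `[1,2]`-set of `H`.
-/

open SimpleGraph

namespace SimpleGraph

variable {V W : Type*} {G : SimpleGraph V} {H : SimpleGraph W}

lemma layer_subset_lexProd_neighborSet {u v : V} (huv : G.Adj u v) (w : W) :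
    layer v ⊆ (G.lexProd H).neighborSet (u, w) := by
  rintro ⟨x, y⟩ rfl
  exact Or.inl huv

lemma lexProd_neighborSet_of_forall_not_adj {v : V} (hv : ∀ u, ¬ G.Adj v u) (w : W) :
    (G.lexProd H).neighborSet (v, w) = Prod.mk v '' H.neighborSet w := by
  ext ⟨x, y⟩
  constructor
  · rintro (hG | ⟨rfl, hH⟩)
    · exact absurd hG (hv x)
    · exact ⟨y, hH, rfl⟩
  · rintro ⟨y, hH, hxy⟩
    cases hxy
    exact Or.inr ⟨rfl, hH⟩

lemma Preconnected.eq_of_forall_not_adj (hG : G.Preconnected) {v : V}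
    (hv : ∀ u, ¬ G.Adj v u) (u : V) : u = v := by
  obtain ⟨p⟩ := hG v u
  cases p with
  | nil => rfl
  | cons h _ => exact absurd h (hv _)

end SimpleGraph

namespace IsTotalOneK

variable {V W : Type*} {G : SimpleGraph V} {H : SimpleGraph W} {k : ℕ} {D : Set (V × W)}

lemma forall_not_adj_of_lt_ncard_layer_inter (hD : IsTotalOneK (G.lexProd H) k D) {v : V}
    (hv : k < (layer v ∩ D).ncard) (u : V) : ¬ G.Adj v u := by
  intro hvu
  obtain ⟨w⟩ : Nonempty W := by
    obtain ⟨p, -⟩ := Set.nonempty_of_ncard_ne_zero (s := layer v ∩ D) (by omega)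
    exact ⟨p.2⟩
  obtain ⟨hpos, hle⟩ := hD (u, w)
  have hsub : layer v ∩ D ⊆ (G.lexProd H).neighborSet (u, w) ∩ D :=
    Set.inter_subset_inter_left D (layer_subset_lexProd_neighborSet hvu.symm w)
  -- `ncard` is `0` on infinite sets, so `hpos` also says the right-hand side is finite.
  have := Set.ncard_le_ncard hsub (Set.finite_of_ncard_pos hpos)
  omega

lemma of_lexProd_of_forall_not_adj (hD : IsTotalOneK (G.lexProd H) k D) {v : V}
    (hv : ∀ u, ¬ G.Adj v u) : IsTotalOneK H k {w | (v, w) ∈ D} := by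
  intro w
  have htrace : (G.lexProd H).neighborSet (v, w) ∩ D =
      Prod.mk v '' (H.neighborSet w ∩ {w | (v, w) ∈ D}) := by
    rw [lexProd_neighborSet_of_forall_not_adj hv, ← Set.image_inter_preimage]
    rfl
  simpa only [htrace, Set.ncard_image_of_injective _ (Prod.mk_right_injective v)] using hD (v, w)

end IsTotalOneK

theorem stmt6_general {V W : Type*} [Fintype V] (G : SimpleGraph V)
    (H : SimpleGraph W) (hconn : G.Connected) (D : Set (V × W))
    (hD : IsTotalOneK (G.lexProd H) 2 D)
    (v : V) (hv : 2 < ((layer v : Set (V × W)) ∩ D).ncard) :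
    Fintype.card V = 1 ∧ ∃ S : Set W, IsTotalOneK H 2 S := by
  have hiso := hD.forall_not_adj_of_lt_ncard_layer_inter hv
  exact ⟨Fintype.card_eq_one_iff.mpr ⟨v, hconn.preconnected.eq_of_forall_not_adj hiso⟩,
    _, hD.of_lexProd_of_forall_not_adj hiso⟩

/-- If a total `[1,2]`-set `D` of `G∘H` (with `G` connected) contains
more than two vertices of some `H`-layer, then `G = K_1` and `H` has a total
`[1,2]`-set. -/
theorem stmt6 {V W : Type*} [Fintype V] [Fintype W] (G : SimpleGraph V)
    (H : SimpleGraph W) (hconn : G.Connected) (D : Set (V × W))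
    (hD : IsTotalOneK (G.lexProd H) 2 D)
    (v : V) (hv : 2 < ((layer v : Set (V × W)) ∩ D).ncard) :
    Fintype.card V = 1 ∧ ∃ S : Set W, IsTotalOneK H 2 S :=
  stmt6_general G H hconn D hD v hv
end

section
/- Let G be a connected finite simple graph with at least two vertices, let H be a finite simple graph with no isolated vertex, and let D be a total [1,2]-set of the lexicographic product G∘H such that A_1^D ≠ ∅ and A_2^D ≠ ∅. Then: (1) for every v ∈ V(G) and every pair of vertices u', u'' ∈ V(H) with (v,u'), (v,u'') ∈ D, the set {u',u''} is a total [1,2]-set of H; (2) S' = {v ∈ V(G) : (v,u) ∈ D for some u} is a 1-dependent [1,2]-set of G; (3) for every v ∈ S' with |N_G(v) ∩ S'| = 0 and every v' ∈ S'∖{v}, the distance dist_G(v,v') ≥ 3. -/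
open SimpleGraph

/-!
A vertex `p` of `G ∘ H` is adjacent to the `D`-vertices of its own layer whose second
coordinate is `H`-adjacent to `p.2`, and to all `D`-vertices in the layers over the
`G`-neighbours of `p.1`; since `p` has at most two `D`-neighbours, each conclusion follows
by exhibiting a vertex that would otherwise see three. Projecting the `D`-neighbours of
`(v, w)` outside the layer of `v` onto `G` bounds the `S'`-neighbours of `v` by two, and by
one when `(v, u) ∈ D` for an `H`-neighbour `u` of `w`. If `(x, a) ∈ D` and `x` is adjacent to
`v`, the vertex `(x, w)` with `w` adjacent to `a` shows that the layer over `v` meets `D` at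
most once. A vertex `v ∈ S'` without neighbours in `S'` has its `D`-neighbours inside its own
layer, hence two `D`-vertices there, and a common neighbour of `v` and another `v' ∈ S'`
would see both of them and a `D`-vertex over `v'`.
-/

section TotalOneTwo

variable {α : Type*} {Γ : SimpleGraph α} {D : Set α}

theorem IsTotalOneK.exists_adj_mem {k : ℕ} (hD : IsTotalOneK Γ k D) (p : α) :
    ∃ q ∈ D, Γ.Adj p q := by
  obtain ⟨q, hadj, hq⟩ := Set.nonempty_of_ncard_ne_zero (Nat.one_le_iff_ne_zero.mp (hD p).1)
  exact ⟨q, hq, hadj⟩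

theorem IsTotalOneK.ncard_le_of_subset {k : ℕ} (hD : IsTotalOneK Γ k D) {p : α} {s : Set α}
    (hs : s ⊆ Γ.neighborSet p ∩ D) : s.ncard ≤ k :=
  (Set.ncard_le_ncard hs (Set.finite_of_ncard_pos (hD p).1)).trans (hD p).2

theorem IsTotalOneK.false_of_three_adj (hD : IsTotalOneK Γ 2 D) {p a b c : α}
    (ha : a ∈ D) (hb : b ∈ D) (hc : c ∈ D) (hpa : Γ.Adj p a) (hpb : Γ.Adj p b)
    (hpc : Γ.Adj p c) (hab : a ≠ b) (hac : a ≠ c) (hbc : b ≠ c) : False := by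
  have hsub : ({a, b, c} : Set α) ⊆ Γ.neighborSet p ∩ D := by
    rintro x (rfl | rfl | rfl)
    exacts [⟨hpa, ha⟩, ⟨hpb, hb⟩, ⟨hpc, hc⟩]
  have h3 : ({a, b, c} : Set α).ncard = 3 := Set.ncard_eq_three.mpr ⟨a, b, c, hab, hac, hbc, rfl⟩
  have := hD.ncard_le_of_subset hsub
  omega

end TotalOneTwo

namespace SimpleGraph

variable {V W : Type*} {G : SimpleGraph V} {H : SimpleGraph W}

theorem lexProd_adj_of_left {v v' : V} (h : G.Adj v v') (w w' : W) :
    (G.lexProd H).Adj (v, w) (v', w') :=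
  Or.inl h

theorem lexProd_adj_of_right (v : V) {w w' : W} (h : H.Adj w w') :
    (G.lexProd H).Adj (v, w) (v, w') :=
  Or.inr ⟨rfl, h⟩

/-- The projection `S'` of `D ⊆ V × W` onto the first factor. -/
def projFst (D : Set (V × W)) : Set V := {v | ∃ u, (v, u) ∈ D}

theorem image_fst_lexProd_neighborSet_inter_diff_layer (D : Set (V × W)) (v : V) (w : W) :
    Prod.fst '' (((G.lexProd H).neighborSet (v, w) ∩ D) \ layer v) =
      G.neighborSet v ∩ projFst D := by
  ext x
  constructor
  · rintro ⟨⟨x, u⟩, ⟨⟨hadj, hD⟩, hx⟩, rfl⟩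
    have hxv : x ≠ v := hx
    refine ⟨?_, u, hD⟩
    rcases hadj with h | ⟨h, -⟩
    · exact h
    · exact absurd h.symm hxv
  · rintro ⟨hadj, u, hD⟩
    exact ⟨(x, u), ⟨⟨lexProd_adj_of_left hadj w u, hD⟩, hadj.ne.symm⟩, rfl⟩

theorem ncard_neighborSet_inter_projFst_le [Finite V] [Finite W] (D : Set (V × W)) (v : V)
    (w : W) : (G.neighborSet v ∩ projFst D).ncard ≤
      (((G.lexProd H).neighborSet (v, w) ∩ D) \ layer v).ncard := by
  rw [← image_fst_lexProd_neighborSet_inter_diff_layer]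
  exact Set.ncard_image_le

variable {D : Set (V × W)} (hD : IsTotalOneK (G.lexProd H) 2 D)
include hD

theorem eq_or_eq_of_mem_layer {v v' : V} (hv : G.Adj v' v) {u u' u'' : W} (hu : (v, u) ∈ D)
    (hu' : (v, u') ∈ D) (hu'' : (v, u'') ∈ D) (hne : u' ≠ u'') : u = u' ∨ u = u'' := by
  by_contra! h
  exact hD.false_of_three_adj hu hu' hu'' (lexProd_adj_of_left hv u' u)
    (lexProd_adj_of_left hv u' u') (lexProd_adj_of_left hv u' u'') (by simp [h.1])
    (by simp [h.2]) (by simp [hne])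

theorem eq_of_mem_layer_of_adj (hH : ∀ w : W, (H.neighborSet w).Nonempty) {x v : V}
    {y : W} (hxy : (x, y) ∈ D) (hxv : G.Adj x v) {a b : W} (ha : (v, a) ∈ D)
    (hb : (v, b) ∈ D) : a = b := by
  by_contra hab
  obtain ⟨w, hw⟩ := hH y
  exact hD.false_of_three_adj hxy ha hb (lexProd_adj_of_right x (H.adj_symm hw))
    (lexProd_adj_of_left hxv w a) (lexProd_adj_of_left hxv w b) (by simp [hxv.ne])
    (by simp [hxv.ne]) (by simp [hab])

theorem isTotalOneK_pair (hH : ∀ w : W, (H.neighborSet w).Nonempty) {v v' : V}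
    (hv : G.Adj v' v) {u' u'' : W} (hu' : (v, u') ∈ D) (hu'' : (v, u'') ∈ D)
    (hne : u' ≠ u'') : IsTotalOneK H 2 {u', u''} := by
  intro w
  refine ⟨?_, ?_⟩
  · obtain ⟨⟨x, u⟩, hxu, hadj⟩ := hD.exists_adj_mem (v, w)
    rcases hadj with hvx | ⟨rfl, hwu⟩
    · exact absurd (eq_of_mem_layer_of_adj hD hH hxu hvx.symm hu' hu'') hne
    · have hmem : u ∈ H.neighborSet w ∩ {u', u''} :=
        ⟨hwu, eq_or_eq_of_mem_layer hD hv hxu hu' hu'' hne⟩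
      exact (Set.ncard_pos).mpr ⟨u, hmem⟩
  · calc (H.neighborSet w ∩ {u', u''}).ncard ≤ ({u', u''} : Set W).ncard :=
          Set.ncard_le_ncard Set.inter_subset_right
      _ = 2 := Set.ncard_pair hne

theorem exists_ne_mem_layer {v : V} (u : W)
    (hv : G.neighborSet v ∩ projFst D = ∅) : ∃ u₂, (v, u₂) ∈ D ∧ u₂ ≠ u := by
  obtain ⟨⟨x, u₂⟩, hxu₂, hadj⟩ := hD.exists_adj_mem (v, u)
  rcases hadj with hvx | ⟨rfl, huu₂⟩
  · exact (Set.eq_empty_iff_forall_notMem.mp hv x ⟨hvx, u₂, hxu₂⟩).elim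
  · exact ⟨u₂, hxu₂, huu₂.ne.symm⟩

theorem three_le_dist_projFst (hG : G.Connected) {v v' : V} (hv : v ∈ projFst D)
    (hempty : G.neighborSet v ∩ projFst D = ∅) (hv' : v' ∈ projFst D) (hne : v' ≠ v) :
    3 ≤ G.dist v v' := by
  obtain ⟨u, hu⟩ := hv
  obtain ⟨y, hy⟩ := hv'
  obtain ⟨u₂, hu₂, hu₂u⟩ := exists_ne_mem_layer hD u hempty
  have h2 : 2 < G.edist v v' := by
    refine two_lt_edist_iff.mpr ⟨hne.symm, fun hadj => ?_, ?_⟩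
    · exact Set.eq_empty_iff_forall_notMem.mp hempty v' ⟨hadj, y, hy⟩
    · refine Set.eq_empty_of_forall_notMem fun x hx => ?_
      obtain ⟨hvx, hv'x⟩ := (G.mem_commonNeighbors).mp hx
      exact hD.false_of_three_adj hu hu₂ hy (lexProd_adj_of_left hvx.symm u u)
        (lexProd_adj_of_left hvx.symm u u₂) (lexProd_adj_of_left hv'x.symm u y)
        (by simp [hu₂u.symm]) (by simp [hne.symm]) (by simp [hne.symm])
  rw [← (hG.preconnected v v').coe_dist_eq_edist] at h2
  exact_mod_cast h2

variable [Finite V] [Finite W]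

theorem isOneK_projFst [Nonempty W] : IsOneK G 2 (projFst D) := by
  intro v hv
  obtain ⟨w⟩ := ‹Nonempty W›
  refine ⟨?_, ?_⟩
  · obtain ⟨⟨x, u⟩, hxu, hadj⟩ := hD.exists_adj_mem (v, w)
    have hvx : G.Adj v x := by
      rcases hadj with h | ⟨rfl, -⟩
      exacts [h, absurd ⟨u, hxu⟩ hv]
    exact (Set.ncard_pos).mpr ⟨x, hvx, u, hxu⟩
  · calc (G.neighborSet v ∩ projFst D).ncard
        ≤ (((G.lexProd H).neighborSet (v, w) ∩ D) \ layer v).ncard :=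
          ncard_neighborSet_inter_projFst_le D v w
      _ ≤ 2 := hD.ncard_le_of_subset Set.sdiff_subset

theorem isJDep_projFst (hH : ∀ w : W, (H.neighborSet w).Nonempty) :
    IsJDep G 1 (projFst D) := by
  rintro v ⟨u, hu⟩
  obtain ⟨w, hw⟩ := hH u
  have hvu : (v, u) ∈ (G.lexProd H).neighborSet (v, w) ∩ D :=
    ⟨lexProd_adj_of_right v (H.adj_symm hw), hu⟩
  refine Nat.le_of_lt_succ ?_
  calc (G.neighborSet v ∩ projFst D).ncard
      ≤ (((G.lexProd H).neighborSet (v, w) ∩ D) \ layer v).ncard :=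
        ncard_neighborSet_inter_projFst_le D v w
    _ < ((G.lexProd H).neighborSet (v, w) ∩ D).ncard :=
        Set.ncard_lt_ncard ⟨Set.sdiff_subset, fun h => (h hvu).2 rfl⟩
    _ ≤ 2 := (hD (v, w)).2

end SimpleGraph

theorem stmt9_general {V W : Type*} [Fintype V] [Fintype W] (G : SimpleGraph V)
    (H : SimpleGraph W) (hconn : G.Connected) (hcard : 2 ≤ Fintype.card V)
    (hiso : ∀ w : W, (H.neighborSet w).Nonempty)
    (D : Set (V × W)) (hD : IsTotalOneK (G.lexProd H) 2 D)
    (hA1 : {p ∈ D | ((layer p.1 : Set (V × W)) ∩ D).ncard = 1}.Nonempty) :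
    (∀ v : V, ∀ u' u'' : W, (v, u') ∈ D → (v, u'') ∈ D → u' ≠ u'' →
        IsTotalOneK H 2 {u', u''}) ∧
    (IsOneK G 2 {x | ∃ u : W, (x, u) ∈ D} ∧
        IsJDep G 1 {x | ∃ u : W, (x, u) ∈ D}) ∧
    (∀ v ∈ {x | ∃ u : W, (x, u) ∈ D},
        (G.neighborSet v ∩ {x | ∃ u : W, (x, u) ∈ D}).ncard = 0 →
          ∀ v' ∈ {x | ∃ u : W, (x, u) ∈ D}, v' ≠ v → 3 ≤ G.dist v v') := by
  have : Nontrivial V := Fintype.one_lt_card_iff_nontrivial.mp hcard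
  obtain ⟨⟨-, w⟩, -⟩ := hA1
  have : Nonempty W := ⟨w⟩
  refine ⟨fun v u' u'' hu' hu'' hne => ?_, ⟨isOneK_projFst hD, isJDep_projFst hD hiso⟩,
    fun v hv hv0 v' hv' hne =>
      three_le_dist_projFst hD hconn hv ((Set.ncard_eq_zero).mp hv0) hv' hne⟩
  obtain ⟨v', hvv'⟩ := G.exists_adj_iff_not_isIsolated.mpr (hconn.preconnected.not_isIsolated v)
  exact isTotalOneK_pair hD hiso hvv'.symm hu' hu'' hne

/-- Let `G` be connected with at least two vertices, `H` have no
isolated vertex, and `D` be a total `[1,2]`-set of `G∘H` with `A_1^D ≠ ∅` and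
`A_2^D ≠ ∅`. Then: (1) any two distinct vertices `u', u''` of `H` with `(v,u')` and
`(v,u'')` in `D` form a total `[1,2]`-set of `H`; (2) the projection `S'` of `D` is a
`1`-dependent `[1,2]`-set of `G`; (3) any `v ∈ S'` with no neighbor in `S'` is at
distance at least `3` from every other vertex of `S'`. -/
theorem stmt9 {V W : Type*} [Fintype V] [Fintype W] (G : SimpleGraph V)
    (H : SimpleGraph W) (hconn : G.Connected) (hcard : 2 ≤ Fintype.card V)
    (hiso : ∀ w : W, (H.neighborSet w).Nonempty)
    (D : Set (V × W)) (hD : IsTotalOneK (G.lexProd H) 2 D)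
    (hA1 : {p ∈ D | ((layer p.1 : Set (V × W)) ∩ D).ncard = 1}.Nonempty)
    (hA2 : {p ∈ D | ((layer p.1 : Set (V × W)) ∩ D).ncard = 2}.Nonempty) :
    (∀ v : V, ∀ u' u'' : W, (v, u') ∈ D → (v, u'') ∈ D → u' ≠ u'' →
        IsTotalOneK H 2 {u', u''}) ∧
    (IsOneK G 2 {x | ∃ u : W, (x, u) ∈ D} ∧
        IsJDep G 1 {x | ∃ u : W, (x, u) ∈ D}) ∧
    (∀ v ∈ {x | ∃ u : W, (x, u) ∈ D},
        (G.neighborSet v ∩ {x | ∃ u : W, (x, u) ∈ D}).ncard = 0 →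
          ∀ v' ∈ {x | ∃ u : W, (x, u) ∈ D}, v' ≠ v → 3 ≤ G.dist v v') :=
  stmt9_general G H hconn hcard hiso D hD hA1
end

section
/- Let G be a connected finite simple graph and H a nonempty finite simple graph. (i) If γ(H) = 1, then γ(G∘H) = γ(G). (ii) If G has at least two vertices and γ(H) ≥ 2, then γ(G∘H) = γ_t(G). -/
open SimpleGraph

/-! A dominating set `D` of `G ∘ H` projects onto a dominating set `A` of `G`. A vertex `v` of
`G` with no neighbour in `A` can only be dominated inside its own layer, so the slice of `D`
over `v` dominates `H`; when `γ(H) ≥ 2` this slice has at least two points, and these spare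
points pay for adding one neighbour of each such `v` to `A`, which yields a total dominating
set of `G` of size at most `|D|`. Conversely `D × S` dominates `G ∘ H` whenever `D` dominates
`G` and `S` dominates `H`, and `D × {w}` does so as soon as `D` totally dominates `G`. -/

open Finset in
lemma ncard_image_add_ncard_le_of_two_le_ncard_fiber {α β : Type*} [Finite α] {f : α → β}
    {s : Set α} {t : Set β} (ht : ∀ b ∈ t, 2 ≤ (s ∩ f ⁻¹' {b}).ncard) :
    (f '' s).ncard + t.ncard ≤ s.ncard := by
  classical
  have hts : t ⊆ f '' s := fun b hb => by
    obtain ⟨a, ha, hab⟩ := Set.nonempty_of_ncard_ne_zero (s := s ∩ f ⁻¹' {b})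
      (by have := ht b hb; omega)
    exact ⟨a, ha, hab⟩
  obtain ⟨s, rfl⟩ := s.toFinite.exists_finset_coe
  obtain ⟨t, rfl⟩ := ((f '' ↑s).toFinite.subset hts).exists_finset_coe
  rw [← Finset.coe_image, Finset.coe_subset] at hts
  have hfiber (b : β) : (↑s ∩ f ⁻¹' {b}).ncard = #{a ∈ s | f a = b} := by
    rw [← Set.ncard_coe_finset]
    congr 1
    ext a
    simp
  have hfiber_pos : ∀ b ∈ s.image f, 1 ≤ #{a ∈ s | f a = b} := by
    intro b hb
    obtain ⟨a, ha, rfl⟩ := Finset.mem_image.mp hb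
    exact Finset.card_pos.mpr ⟨a, Finset.mem_filter.mpr ⟨ha, rfl⟩⟩
  rw [← Finset.coe_image, Set.ncard_coe_finset, Set.ncard_coe_finset, Set.ncard_coe_finset]
  calc #(s.image f) + #t = #(s.image f \ t) + 2 * #t := by
        rw [← Finset.card_sdiff_add_card_eq_card hts]; ring
    _ = ∑ b ∈ s.image f \ t, 1 + ∑ b ∈ t, 2 := by simp [mul_comm]
    _ ≤ ∑ b ∈ s.image f \ t, #{a ∈ s | f a = b} + ∑ b ∈ t, #{a ∈ s | f a = b} := by
        gcongr with b hb b hb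
        · exact hfiber_pos b (Finset.sdiff_subset hb)
        · simpa [hfiber] using ht b hb
    _ = #s := by rw [Finset.sum_sdiff hts, ← Finset.card_eq_sum_card_image]

section Domination

variable {V : Type*} (G : SimpleGraph V)

lemma gammaDom_le {D : Set V} (hD : IsDomSet G D) : gammaDom G ≤ D.ncard :=
  Nat.sInf_le ⟨D, hD, rfl⟩

lemma exists_isDomSet_ncard_eq_gammaDom [Finite V] :
    ∃ D, IsDomSet G D ∧ D.ncard = gammaDom G :=
  Nat.sInf_mem (s := {n | ∃ D : Set V, IsDomSet G D ∧ D.ncard = n})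
    ⟨_, Set.univ, fun _ hv => (hv trivial).elim, rfl⟩

lemma gammaTotalDom_le {D : Set V} (hD : IsTotalDomSet G D) : gammaTotalDom G ≤ D.ncard :=
  Nat.sInf_le ⟨D, hD, rfl⟩

lemma exists_isTotalDomSet_ncard_eq_gammaTotalDom [Finite V] (hG : ∀ v, ∃ u, G.Adj v u) :
    ∃ D, IsTotalDomSet G D ∧ D.ncard = gammaTotalDom G :=
  Nat.sInf_mem (s := {n | ∃ D : Set V, IsTotalDomSet G D ∧ D.ncard = n})
    ⟨_, Set.univ, fun v => (hG v).imp fun _ hu => ⟨trivial, hu⟩, rfl⟩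

lemma isTotalDomSet_union_image_undominated {u : V → V} (hu : ∀ v, G.Adj v (u v)) (A : Set V) :
    IsTotalDomSet G (A ∪ u '' {v | ∀ a ∈ A, ¬ G.Adj v a}) := by
  intro v
  by_cases hv : ∀ a ∈ A, ¬ G.Adj v a
  · exact ⟨u v, Or.inr ⟨v, hv, rfl⟩, hu v⟩
  · push Not at hv
    obtain ⟨a, ha, hva⟩ := hv
    exact ⟨a, Or.inl ha, hva⟩

end Domination

section LexProd

variable {V W : Type*} {G : SimpleGraph V} {H : SimpleGraph W}

lemma IsDomSet.prod_lexProd [Nonempty W] {D : Set V} {S : Set W} (hD : IsDomSet G D)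
    (hS : IsDomSet H S) : IsDomSet (G.lexProd H) (D ×ˢ S) := by
  have hSne : S.Nonempty := by
    obtain ⟨w⟩ := ‹Nonempty W›
    by_cases hw : w ∈ S
    · exact ⟨w, hw⟩
    · exact (hS w hw).imp fun s hs => hs.1
  rintro ⟨g, h⟩ hgh
  by_cases hg : g ∈ D
  · obtain ⟨s, hs, hhs⟩ := hS h fun hh => hgh ⟨hg, hh⟩
    exact ⟨(g, s), ⟨hg, hs⟩, Or.inr ⟨rfl, hhs⟩⟩
  · obtain ⟨d, hd, hgd⟩ := hD g hg
    obtain ⟨s, hs⟩ := hSne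
    exact ⟨(d, s), ⟨hd, hs⟩, Or.inl hgd⟩

lemma IsTotalDomSet.prod_singleton_lexProd {D : Set V} (hD : IsTotalDomSet G D) (w : W) :
    IsDomSet (G.lexProd H) (D ×ˢ {w}) := by
  rintro ⟨g, h⟩ -
  obtain ⟨d, hd, hgd⟩ := hD g
  exact ⟨(d, w), ⟨hd, rfl⟩, Or.inl hgd⟩

lemma IsDomSet.image_fst [Nonempty W] {D : Set (V × W)} (hD : IsDomSet (G.lexProd H) D) :
    IsDomSet G (Prod.fst '' D) := by
  intro v hv
  obtain ⟨w⟩ := ‹Nonempty W›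
  obtain ⟨⟨a, b⟩, hab, hadj⟩ := hD (v, w) fun h => hv ⟨_, h, rfl⟩
  rcases hadj with hva | ⟨rfl, -⟩
  · exact ⟨a, ⟨_, hab, rfl⟩, hva⟩
  · exact (hv ⟨_, hab, rfl⟩).elim

lemma IsDomSet.image_snd_fiber {D : Set (V × W)} (hD : IsDomSet (G.lexProd H) D) {v : V}
    (hv : ∀ a ∈ Prod.fst '' D, ¬ G.Adj v a) :
    IsDomSet H (Prod.snd '' (D ∩ Prod.fst ⁻¹' {v})) := by
  intro w hw
  obtain ⟨⟨a, b⟩, hab, hadj⟩ := hD (v, w) fun h => hw ⟨_, ⟨h, rfl⟩, rfl⟩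
  rcases hadj with hva | ⟨rfl, hwb⟩
  · exact (hv a ⟨_, hab, rfl⟩ hva).elim
  · exact ⟨b, ⟨_, ⟨hab, rfl⟩, rfl⟩, hwb⟩

variable [Finite V]

lemma gammaDom_le_gammaDom_lexProd [Finite W] [Nonempty W] :
    gammaDom G ≤ gammaDom (G.lexProd H) := by
  obtain ⟨D, hD, hcard⟩ := exists_isDomSet_ncard_eq_gammaDom (G.lexProd H)
  calc gammaDom G ≤ (Prod.fst '' D).ncard := gammaDom_le G hD.image_fst
    _ ≤ D.ncard := Set.ncard_image_le D.toFinite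
    _ = _ := hcard

lemma gammaDom_lexProd_le_mul [Finite W] [Nonempty W] :
    gammaDom (G.lexProd H) ≤ gammaDom G * gammaDom H := by
  obtain ⟨D, hD, hDcard⟩ := exists_isDomSet_ncard_eq_gammaDom G
  obtain ⟨S, hS, hScard⟩ := exists_isDomSet_ncard_eq_gammaDom H
  rw [← hDcard, ← hScard, ← Set.ncard_prod]
  exact gammaDom_le _ (hD.prod_lexProd hS)

lemma gammaDom_lexProd_le_gammaTotalDom [Nonempty W] (hG : ∀ v, ∃ u, G.Adj v u) :
    gammaDom (G.lexProd H) ≤ gammaTotalDom G := by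
  obtain ⟨D, hD, hcard⟩ := exists_isTotalDomSet_ncard_eq_gammaTotalDom G hG
  obtain ⟨w⟩ := ‹Nonempty W›
  simpa [← hcard, Set.ncard_prod] using gammaDom_le _ (hD.prod_singleton_lexProd (H := H) w)

lemma gammaTotalDom_le_gammaDom_lexProd [Finite W] (hG : ∀ v, ∃ u, G.Adj v u)
    (hH : 2 ≤ gammaDom H) :
    gammaTotalDom G ≤ gammaDom (G.lexProd H) := by
  choose u hu using hG
  obtain ⟨D, hD, hcard⟩ := exists_isDomSet_ncard_eq_gammaDom (G.lexProd H)
  set A := Prod.fst '' D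
  set B := {v | ∀ a ∈ A, ¬ G.Adj v a}
  have hfiber : ∀ v ∈ B, 2 ≤ (D ∩ Prod.fst ⁻¹' {v}).ncard := fun v hv =>
    hH.trans <| (gammaDom_le H (hD.image_snd_fiber hv)).trans
      (Set.ncard_image_le (Set.toFinite _))
  calc gammaTotalDom G ≤ (A ∪ u '' B).ncard :=
        gammaTotalDom_le G (isTotalDomSet_union_image_undominated G hu A)
    _ ≤ A.ncard + B.ncard := by
        grw [Set.ncard_union_le, Set.ncard_image_le B.toFinite]
    _ ≤ D.ncard := ncard_image_add_ncard_le_of_two_le_ncard_fiber hfiber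
    _ = _ := hcard

end LexProd

/-- Let `G` be connected and `H` nonempty. (i) If `γ(H) = 1` then
`γ(G∘H) = γ(G)`. (ii) If `G` has at least two vertices and `γ(H) ≥ 2` then
`γ(G∘H) = γ_t(G)`. -/
theorem stmt16 {V W : Type*} [Fintype V] [Fintype W] (G : SimpleGraph V)
    (H : SimpleGraph W) (hconn : G.Connected) (hW : Nonempty W) :
    (gammaDom H = 1 → gammaDom (G.lexProd H) = gammaDom G) ∧
    (2 ≤ Fintype.card V → 2 ≤ gammaDom H →
      gammaDom (G.lexProd H) = gammaTotalDom G) := by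
  refine ⟨fun hH => le_antisymm ?_ gammaDom_le_gammaDom_lexProd, fun hV hH => ?_⟩
  · simpa [hH] using gammaDom_lexProd_le_mul (G := G) (H := H)
  · have : Nontrivial V := Fintype.one_lt_card_iff_nontrivial.mp hV
    have hG := hconn.preconnected.exists_adj_of_nontrivial
    exact le_antisymm (gammaDom_lexProd_le_gammaTotalDom hG)
      (gammaTotalDom_le_gammaDom_lexProd hG hH)
end
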